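/- arXiv:1212.0631 — 2 statements merged into one kernel-verified Lean document; each statement's English description precedes it below -/
import Mathlib

section
/- Let n ≥ 2 be an integer and T > 0. Then the Lebesgue volume of the Alexandrov interval I[p,q] in n-dimensional Minkowski space equals (2·A_{n-2}/(n(n-1)))·(T/2)^n, where A_{n-2} = 2π^{(n-1)/2}/Γ((n-1)/2) is the surface area of the unit sphere S^{n-2} ⊂ ℝ^{n-1}. -/
open MeasureTheory

/-- A point of `n`-dimensional Minkowski space: a time coordinate in `ℝ`
and a spatial part in `ℝ^{n-1}` (with the Euclidean norm). -/
abbrev MinkPt (n : ℕ) := ℝ × EuclideanSpace ℝ (Fin (n - 1))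

/-- The Minkowski causal order: `x ⪯ y` iff `y⁰ - x⁰ ≥ ‖y⃗ - x⃗‖`. -/
def causalLE {n : ℕ} (x y : MinkPt n) : Prop := ‖y.2 - x.2‖ ≤ y.1 - x.1

/-- The bottom tip `p = (-T/2, 0)` of the causal diamond. -/
noncomputable def pDiam (n : ℕ) (T : ℝ) : MinkPt n := (-(T / 2), 0)

/-- The top tip `q = (T/2, 0)` of the causal diamond. -/
noncomputable def qDiam (n : ℕ) (T : ℝ) : MinkPt n := (T / 2, 0)

/-- The Alexandrov interval (causal diamond) `I[p,q] = {x : p ⪯ x ⪯ q}`. -/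
def diamond (n : ℕ) (T : ℝ) : Set (MinkPt n) :=
  {x | causalLE (pDiam n T) x ∧ causalLE x (qDiam n T)}

/-- The surface area `A_{d} = 2π^{(d+1)/2}/Γ((d+1)/2)` of the unit sphere `S^{d} ⊂ ℝ^{d+1}`;
here we take `d = n - 2`, so `A_{n-2} = 2π^{(n-1)/2}/Γ((n-1)/2)`. -/
noncomputable def sphereArea (n : ℕ) : ℝ :=
  2 * Real.pi ^ (((n : ℝ) - 1) / 2) / Real.Gamma (((n : ℝ) - 1) / 2)

/-!
The slice of the diamond at time `t` is the closed ball of radius `T/2 - |t|` in `ℝ^{n-1}`, so by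
Fubini its volume is `ω_{n-1} ∫ (T/2 - |t|)₊^{n-1} dt = ω_{n-1} · 2 (T/2)^n / n`, where
`ω_{n-1} = π^{(n-1)/2} / Γ((n-1)/2 + 1)` is the volume of the unit ball. Finally
`Γ(x + 1) = x Γ(x)` gives `ω_{n-1} = A_{n-2} / (n-1)`.
-/

open Real Set Module

theorem volume_setOf_norm_le {E : Type*} [NormedAddCommGroup E] [InnerProductSpace ℝ E]
    [FiniteDimensional ℝ E] [MeasurableSpace E] [BorelSpace E] [Nontrivial E]
    {r : ℝ → ℝ} (hr : Measurable r) :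
    volume {z : ℝ × E | ‖z.2‖ ≤ r z.1} =
      (∫⁻ t, ENNReal.ofReal (r t) ^ finrank ℝ E) *
        ENNReal.ofReal (√π ^ finrank ℝ E / Gamma (finrank ℝ E / 2 + 1)) := by
  have hslice (t : ℝ) :
      Prod.mk t ⁻¹' {z : ℝ × E | ‖z.2‖ ≤ r z.1} = Metric.closedBall 0 (r t) := by
    ext x
    simp
  rw [Measure.volume_eq_prod, Measure.prod_apply (measurableSet_le (by fun_prop) (by fun_prop)),
    ← lintegral_mul_const _ (by fun_prop)]
  simp only [hslice, InnerProductSpace.volume_closedBall]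

theorem toReal_lintegral_ofReal_pow {α : Type*} [MeasurableSpace α] {μ : Measure α} {f : α → ℝ}
    (hf : AEStronglyMeasurable f μ) (d : ℕ) :
    (∫⁻ x, ENNReal.ofReal (f x) ^ d ∂μ).toReal = ∫ x, max (f x) 0 ^ d ∂μ := by
  rw [integral_eq_lintegral_of_nonneg_ae (ae_of_all _ fun x => by positivity) (by fun_prop)]
  congr 2 with x
  rw [ENNReal.ofReal_pow (le_max_right _ _), ENNReal.ofReal_max, ENNReal.ofReal_zero, max_zero]

theorem integral_max_sub_abs_pow {a : ℝ} (ha : 0 ≤ a) {d : ℕ} (hd : d ≠ 0) :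
    ∫ t, max (a - |t|) 0 ^ d = 2 * a ^ (d + 1) / (d + 1 : ℕ) := by
  have hvanish : ∀ t ∈ Ioi 0 \ Ioc 0 a, max (a - t) 0 ^ d = 0 := fun t ht => by
    have : a < t := lt_of_not_ge fun h => ht.2 ⟨ht.1, h⟩
    rw [max_eq_right (by linarith), zero_pow hd]
  have hpoly : EqOn (fun t => max (a - t) 0 ^ d) (fun t => (a - t) ^ d) (uIcc 0 a) :=
      fun t ht => by
    rw [uIcc_of_le ha] at ht
    simp only [max_eq_left (sub_nonneg.2 ht.2)]
  rw [integral_comp_abs (f := fun t => max (a - t) 0 ^ d),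
    setIntegral_eq_of_subset_of_forall_sdiff_eq_zero measurableSet_Ioi Ioc_subset_Ioi_self hvanish,
    ← intervalIntegral.integral_of_le ha, intervalIntegral.integral_congr hpoly,
    intervalIntegral.integral_comp_sub_left (fun t => t ^ d), integral_pow]
  simp only [sub_self, sub_zero, zero_pow d.succ_ne_zero]
  push_cast
  ring

theorem sqrt_pi_pow_div_Gamma_eq_sphereArea_div {d : ℕ} (hd : d ≠ 0) :
    √π ^ d / Gamma (d / 2 + 1) = sphereArea (d + 1) / d := by
  have hΓ : Gamma (d / 2) ≠ 0 := (Gamma_pos_of_pos (by positivity)).ne'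
  rw [sphereArea, Gamma_add_one (by positivity), sqrt_eq_rpow, ← rpow_natCast, ← rpow_mul pi_nonneg]
  push_cast
  rw [add_sub_cancel_right, one_div_mul_eq_div]
  field_simp

theorem diamond_eq_setOf_norm_le (n : ℕ) (T : ℝ) :
    diamond n T = {z | ‖z.2‖ ≤ T / 2 - |z.1|} := by
  ext z
  simp only [diamond, causalLE, pDiam, qDiam, mem_ofPred_eq, zero_sub, norm_neg, sub_zero,
    sub_neg_eq_add]
  constructor
  · rintro ⟨h₁, h₂⟩
    cases abs_cases z.1 <;> linarith
  · intro h
    constructor <;> cases abs_cases z.1 <;> linarith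

/-- The Lebesgue volume of the Alexandrov interval `I[p,q]` in `n`-dimensional
Minkowski space is `(2 A_{n-2}/(n(n-1)))·(T/2)^n`. -/
theorem stmt2 (n : ℕ) (hn : 2 ≤ n) (T : ℝ) (hT : 0 < T) :
    (volume (diamond n T)).toReal =
      2 * sphereArea n / ((n : ℝ) * ((n : ℝ) - 1)) * (T / 2) ^ n := by
  have hd : n - 1 ≠ 0 := by omega
  have : Nonempty (Fin (n - 1)) := ⟨⟨0, by omega⟩⟩
  rw [diamond_eq_setOf_norm_le, volume_setOf_norm_le (r := fun t => T / 2 - |t|) (by fun_prop),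
    ENNReal.toReal_mul, toReal_lintegral_ofReal_pow (by fun_prop), finrank_euclideanSpace_fin,
    integral_max_sub_abs_pow (by positivity) hd, ENNReal.toReal_ofReal (by positivity),
    sqrt_pi_pow_div_Gamma_eq_sphereArea_div hd, Nat.sub_add_cancel (by omega : 1 ≤ n),
    Nat.cast_pred (by omega)]
  have hn' : (2 : ℝ) ≤ n := by exact_mod_cast hn
  have hn1 : (n : ℝ) - 1 ≠ 0 := by linarith
  have hn0 : (n : ℝ) ≠ 0 := by linarith
  field_simp
end

section
/- Let n ≥ 2 be an integer, T > 0, and m ≥ 0 a real number. Then ∫_{I[p,q]} τ(x,q)^m dx = (A_{n-2}/2^{n-1}) · T^{n+m} · Γ(n-1)·Γ(m/2+1) / ( (n+m)·Γ(n+m/2) ), where the integral is with respect to Lebesgue measure on ℝ^n. (For m an even integer this is the formula (A_{n-2} T^{n+m}/2^{n-1}) · (n-2)!·(m/2)! / ((n+m)(n+m/2-1)!).) -/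
open MeasureTheory

/-- The proper time `τ(x,y) = √((y⁰-x⁰)² - ‖y⃗-x⃗‖²)` between causally related points. -/
noncomputable def tau {n : ℕ} (x y : MinkPt n) : ℝ :=
  Real.sqrt ((y.1 - x.1) ^ 2 - ‖y.2 - x.2‖ ^ 2)

/-!
Fubini with the spatial part outside, followed by polar coordinates in `x⃗`, reduces the integral
to `A_{n-2} ∫₀^∞ r^{n-2} F(r) dr`, where `F(r)` integrates `τ(x,q)^m` over the time slice of the
diamond at spatial radius `r`. The light-cone substitution `b = T/2 + r - x⁰` turns
`τ² = (T/2 - x⁰)² - r²` into `b (b - 2r)`. After `s = 2r` and a swap of the order of integration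
on the triangle `0 < s ≤ b ≤ T`, the inner integral is the Beta integral
`∫₀^b s^{n-2} (b - s)^{m/2} ds = B(n-1, m/2+1) b^{n-1+m/2}`.
-/

open Set Real

theorem integral_prod_fun_norm {α E : Type*} [MeasurableSpace α] {ν : Measure α} [SFinite ν]
    [NormedAddCommGroup E] [NormedSpace ℝ E] [FiniteDimensional ℝ E] [MeasurableSpace E]
    [BorelSpace E] [Nontrivial E] (μ : Measure E) [μ.IsAddHaarMeasure] {f : α → ℝ → ℝ}
    (hf : Integrable (fun x : α × E => f x.1 ‖x.2‖) (ν.prod μ)) :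
    ∫ x, f x.1 ‖x.2‖ ∂(ν.prod μ) =
      Module.finrank ℝ E * μ.real (Metric.ball 0 1) *
        ∫ r in Ioi 0, r ^ (Module.finrank ℝ E - 1) * ∫ t, f t r ∂ν := by
  rw [integral_prod_symm _ hf]
  simpa only [nsmul_eq_mul, smul_eq_mul, mul_assoc] using
    integral_fun_norm_addHaar μ fun r => ∫ t, f t r ∂ν

theorem natCast_mul_measureReal_ball_eq_sphereArea {n : ℕ} (hn : 2 ≤ n) :
    ((n - 1 : ℕ) : ℝ) * volume.real (Metric.ball (0 : EuclideanSpace ℝ (Fin (n - 1))) 1) =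
      sphereArea n := by
  have : Nonempty (Fin (n - 1)) := ⟨⟨0, by omega⟩⟩
  have hd : ((n - 1 : ℕ) : ℝ) = n - 1 := by rw [Nat.cast_sub (by omega), Nat.cast_one]
  have hd0 : 0 < ((n : ℝ) - 1) / 2 := by
    have : (2 : ℝ) ≤ n := by exact_mod_cast hn
    linarith
  rw [measureReal_def, EuclideanSpace.volume_ball, Fintype.card_fin, ENNReal.ofReal_one, one_pow,
    one_mul, ENNReal.toReal_ofReal (by positivity), hd, Gamma_add_one hd0.ne', sqrt_eq_rpow,
    ← rpow_natCast, ← rpow_mul pi_pos.le, hd, sphereArea]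
  have hd1 : (n : ℝ) - 1 ≠ 0 := by linarith
  field_simp

theorem integral_Ioi_integral_Icc_swap {g : ℝ → ℝ → ℝ} {T : ℝ}
    (hg : IntegrableOn (Function.uncurry g) {p : ℝ × ℝ | 0 < p.1 ∧ p.1 ≤ p.2 ∧ p.2 ≤ T}) :
    ∫ s in Ioi 0, ∫ b in Icc s T, g s b = ∫ b in Ioc 0 T, ∫ s in Ioc 0 b, g s b := by
  set R := {p : ℝ × ℝ | 0 < p.1 ∧ p.1 ≤ p.2 ∧ p.2 ≤ T}
  have hR : MeasurableSet R :=
    (measurableSet_lt measurable_const measurable_fst).inter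
      ((measurableSet_le measurable_fst measurable_snd).inter
        (measurableSet_le measurable_snd measurable_const))
  calc ∫ s in Ioi 0, ∫ b in Icc s T, g s b
      = ∫ s, ∫ b, R.indicator (Function.uncurry g) (s, b) := by
        rw [← integral_indicator measurableSet_Ioi]
        congr 1 with s
        by_cases hs : 0 < s
        · simp [R, indicator_apply, hs, ← integral_indicator measurableSet_Icc]
        · simp [R, hs]
    _ = ∫ b, ∫ s, R.indicator (Function.uncurry g) (s, b) :=
        integral_integral_swap ((integrable_indicator_iff hR).2 hg)
    _ = ∫ b in Ioc 0 T, ∫ s in Ioc 0 b, g s b := by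
        rw [← integral_indicator measurableSet_Ioc]
        congr 1 with b
        by_cases hb : 0 < b ∧ b ≤ T
        · simp [R, indicator_apply, hb, ← integral_indicator measurableSet_Ioc]
        · have hb_R : ∀ s, (s, b) ∉ R := fun s hs => hb ⟨hs.1.trans_le hs.2.1, hs.2.2⟩
          simp [hb, hb_R]

theorem integral_rpow_mul_sub_rpow {x y b : ℝ} (hx : 0 < x) (hy : 0 < y) (hb : 0 < b) :
    ∫ s in (0)..b, s ^ (x - 1) * (b - s) ^ (y - 1) =
      Gamma x * Gamma y / Gamma (x + y) * b ^ (x + y - 1) := by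
  have hC := Complex.betaIntegral_scaled x y hb
  rw [Complex.betaIntegral_eq_Gamma_mul_div _ _ (by simpa) (by simpa)] at hC
  apply Complex.ofReal_injective
  rw [← intervalIntegral.integral_ofReal]
  convert hC using 1
  · refine intervalIntegral.integral_congr fun s hs => ?_
    rw [uIcc_of_le hb.le] at hs
    rw [Complex.ofReal_mul, Complex.ofReal_cpow hs.1, Complex.ofReal_cpow (sub_nonneg.2 hs.2)]
    push_cast
    ring_nf
  · rw [← Complex.ofReal_add, Complex.Gamma_ofReal, Complex.Gamma_ofReal,
      Complex.Gamma_ofReal]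
    push_cast [Complex.ofReal_cpow hb.le]
    ring

theorem integral_Ioc_pow_mul_sqrt_rpow (k : ℕ) {m b : ℝ} (hm : -2 < m) (hb : 0 < b) :
    ∫ s in Ioc 0 b, s ^ k * √(b * (b - s)) ^ m =
      Gamma (k + 1) * Gamma (m / 2 + 1) / Gamma (k + m / 2 + 2) * b ^ ((k : ℝ) + m + 1) := by
  rw [← intervalIntegral.integral_of_le hb.le]
  calc ∫ s in (0)..b, s ^ k * √(b * (b - s)) ^ m
      = ∫ s in (0)..b, b ^ (m / 2) * (s ^ ((k + 1 : ℝ) - 1) * (b - s) ^ ((m / 2 + 1) - 1)) := by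
        refine intervalIntegral.integral_congr fun s hs => ?_
        rw [uIcc_of_le hb.le] at hs
        rw [sqrt_eq_rpow, ← rpow_mul (mul_nonneg hb.le (sub_nonneg.2 hs.2)),
          mul_rpow hb.le (sub_nonneg.2 hs.2), add_sub_cancel_right, add_sub_cancel_right,
          rpow_natCast]
        ring_nf
    _ = b ^ (m / 2) * (Gamma (k + 1) * Gamma (m / 2 + 1) / Gamma (k + 1 + (m / 2 + 1)) *
          b ^ ((k + 1 : ℝ) + (m / 2 + 1) - 1)) := by
        rw [intervalIntegral.integral_const_mul,
          integral_rpow_mul_sub_rpow (by positivity) (by linarith) hb]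
    _ = _ := by
        rw [mul_left_comm, ← rpow_add hb]
        ring_nf

theorem mem_diamond_iff {n : ℕ} {T : ℝ} {x : MinkPt n} :
    x ∈ diamond n T ↔ ‖x.2‖ ≤ x.1 + T / 2 ∧ ‖x.2‖ ≤ T / 2 - x.1 := by
  simp [diamond, causalLE, pDiam, qDiam, norm_neg]

theorem isCompact_diamond (n : ℕ) (T : ℝ) : IsCompact (diamond n T) := by
  refine Metric.isCompact_of_isClosed_isBounded ?_ ?_
  · have : diamond n T = {x | ‖x.2‖ ≤ x.1 + T / 2} ∩ {x | ‖x.2‖ ≤ T / 2 - x.1} :=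
      Set.ext fun _ => mem_diamond_iff
    rw [this]
    exact (isClosed_le (by fun_prop) (by fun_prop)).inter (isClosed_le (by fun_prop) (by fun_prop))
  · refine isBounded_iff_forall_norm_le.2 ⟨T / 2, fun x hx => ?_⟩
    obtain ⟨h₁, h₂⟩ := mem_diamond_iff.1 hx
    have := norm_nonneg x.2
    exact norm_prod_le_iff.2 ⟨abs_le.2 ⟨by linarith, by linarith⟩, by linarith⟩

theorem integrableOn_diamond_tau_rpow (n : ℕ) (T : ℝ) {m : ℝ} (hm : 0 ≤ m) :
    IntegrableOn (fun x => tau x (qDiam n T) ^ m) (diamond n T) :=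
  ((continuous_rpow_const hm).comp (by unfold tau; fun_prop)).continuousOn.integrableOn_compact
    (isCompact_diamond n T)

noncomputable def diamondProfile (T m t r : ℝ) : ℝ :=
  if r ≤ t + T / 2 ∧ r ≤ T / 2 - t then √((T / 2 - t) ^ 2 - r ^ 2) ^ m else 0

theorem indicator_diamond_tau_rpow {n : ℕ} (T m : ℝ) (x : MinkPt n) :
    (diamond n T).indicator (fun x => tau x (qDiam n T) ^ m) x = diamondProfile T m x.1 ‖x.2‖ := by
  classical
  rw [indicator_apply, mem_diamond_iff]
  simp [diamondProfile, tau, qDiam]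

theorem integral_diamondProfile (T m r : ℝ) :
    ∫ t, diamondProfile T m t r = ∫ b in Icc (2 * r) T, √(b * (b - 2 * r)) ^ m := by
  rw [← integral_sub_left_eq_self _ volume (T / 2 + r), ← integral_indicator measurableSet_Icc]
  congr 1 with b
  have hcond : (r ≤ T / 2 + r - b + T / 2 ∧ r ≤ T / 2 - (T / 2 + r - b)) ↔ 2 * r ≤ b ∧ b ≤ T := by
    constructor <;> rintro ⟨h₁, h₂⟩ <;> constructor <;> linarith
  simp only [diamondProfile, indicator_apply, mem_Icc, hcond]
  congr 4
  ring

theorem integral_Ioi_pow_mul_integral_diamondProfile (k : ℕ) {T m : ℝ} (hT : 0 ≤ T)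
    (hm : 0 ≤ m) :
    ∫ r in Ioi 0, r ^ k * ∫ t, diamondProfile T m t r =
      Gamma (k + 1) * Gamma (m / 2 + 1) / Gamma (k + m / 2 + 2) / 2 ^ (k + 1) *
        (T ^ ((k : ℝ) + m + 2) / (k + m + 2)) := by
  set g : ℝ → ℝ → ℝ := fun s b => s ^ k * √(b * (b - s)) ^ m
  have hg : IntegrableOn (Function.uncurry g) {p : ℝ × ℝ | 0 < p.1 ∧ p.1 ≤ p.2 ∧ p.2 ≤ T} := by
    refine IntegrableOn.mono_set ?_ (fun p hp => ⟨⟨hp.1.le, hp.2.1.trans hp.2.2⟩,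
      ⟨hp.1.le.trans hp.2.1, hp.2.2⟩⟩ : _ ⊆ Icc 0 T ×ˢ Icc 0 T)
    have hcont : Continuous (Function.uncurry g) :=
      (continuous_fst.pow k).mul ((continuous_rpow_const hm).comp (by fun_prop))
    exact hcont.continuousOn.integrableOn_compact (isCompact_Icc.prod isCompact_Icc)
  calc ∫ r in Ioi 0, r ^ k * ∫ t, diamondProfile T m t r
      = (2 ^ k)⁻¹ * ∫ r in Ioi 0, (fun s => ∫ b in Icc s T, g s b) (2 * r) := by
        rw [← integral_const_mul]
        refine setIntegral_congr_fun measurableSet_Ioi fun r _ => ?_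
        simp only [integral_diamondProfile, g, integral_const_mul, mul_pow]
        field_simp
    _ = (2 ^ (k + 1))⁻¹ * ∫ s in Ioi 0, ∫ b in Icc s T, g s b := by
        rw [integral_comp_mul_left_Ioi (fun s => ∫ b in Icc s T, g s b) 0 two_pos, mul_zero,
          smul_eq_mul, ← mul_assoc, pow_succ, mul_inv]
    _ = (2 ^ (k + 1))⁻¹ * ∫ b in Ioc 0 T, ∫ s in Ioc 0 b, g s b := by
        rw [integral_Ioi_integral_Icc_swap hg]
    _ = (2 ^ (k + 1))⁻¹ * ∫ b in Ioc 0 T,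
          Gamma (k + 1) * Gamma (m / 2 + 1) / Gamma (k + m / 2 + 2) * b ^ ((k : ℝ) + m + 1) := by
        congr 1
        exact setIntegral_congr_fun measurableSet_Ioc fun b hb =>
          integral_Ioc_pow_mul_sqrt_rpow k (by linarith) hb.1
    _ = _ := by
        rw [← intervalIntegral.integral_of_le hT, intervalIntegral.integral_const_mul,
          integral_rpow (Or.inl (by linarith [(by positivity : (0 : ℝ) ≤ k + m)])),
          zero_rpow (by positivity)]
        ring_nf

/-- `∫_{I[p,q]} τ(x,q)^m dx
  = (A_{n-2}/2^{n-1}) · T^{n+m} · Γ(n-1)·Γ(m/2+1) / ((n+m)·Γ(n+m/2))`. -/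
theorem stmt3 (n : ℕ) (hn : 2 ≤ n) (T m : ℝ) (hT : 0 < T) (hm : 0 ≤ m) :
    (∫ x in diamond n T, tau x (qDiam n T) ^ m) =
      sphereArea n / 2 ^ (n - 1) * T ^ ((n : ℝ) + m) *
        (Real.Gamma ((n : ℝ) - 1) * Real.Gamma (m / 2 + 1)) /
        (((n : ℝ) + m) * Real.Gamma ((n : ℝ) + m / 2)) := by
  have : Nonempty (Fin (n - 1)) := ⟨⟨0, by omega⟩⟩
  have hint : Integrable (fun x : MinkPt n => diamondProfile T m x.1 ‖x.2‖)
      ((volume : Measure ℝ).prod volume) := by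
    simp_rw [← indicator_diamond_tau_rpow]
    exact (integrableOn_diamond_tau_rpow n T hm).integrable_indicator
      (isCompact_diamond n T).measurableSet
  have hk : ((n - 2 : ℕ) : ℝ) = n - 2 := by rw [Nat.cast_sub hn, Nat.cast_two]
  calc ∫ x in diamond n T, tau x (qDiam n T) ^ m
      = ∫ x : MinkPt n, diamondProfile T m x.1 ‖x.2‖ := by
        rw [← integral_indicator (isCompact_diamond n T).measurableSet]
        simp_rw [indicator_diamond_tau_rpow]
    _ = sphereArea n * ∫ r in Ioi 0, r ^ (n - 2) * ∫ t, diamondProfile T m t r := by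
        rw [Measure.volume_eq_prod, integral_prod_fun_norm volume hint, finrank_euclideanSpace_fin,
          natCast_mul_measureReal_ball_eq_sphereArea hn, Nat.sub_sub]
    _ = _ := by
        rw [integral_Ioi_pow_mul_integral_diamondProfile _ hT.le hm, hk,
          show n - 2 + 1 = n - 1 by omega, show (n : ℝ) - 2 + 1 = n - 1 by ring,
          show (n : ℝ) - 2 + m / 2 + 2 = n + m / 2 by ring,
          show (n : ℝ) - 2 + m + 2 = n + m by ring]
        simp only [div_eq_mul_inv, mul_inv]
        ring
end
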